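/- Let F(w_1,...,w_N) = Σ_D Π_{k∈D} w_k, where D runs over all subsets of {1,...,N} containing no two consecutive integers. Let (x_m)_{m∈ℤ} be defined in ℚ(x_1,x_2) by x_{m-1}x_{m+1} = x_m^2 + 1. Then for every n ≥ 0, x_{-n} = x_1^{-n} x_2^{-(n+1)} · F(w_1,...,w_{2n+1}) evaluated at w_k = x_1^2 if k is odd and w_k = x_2^2 if k is even. -/

import Mathlib

noncomputable section

/-- The ambient field `ℚ(x₁, x₂)` of rational functions in two variables. -/
abbrev Kfield : Type := FractionRing (MvPolynomial (Fin 2) ℚ)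

/-- The first indeterminate `x₁`. -/
def X1 : Kfield := algebraMap (MvPolynomial (Fin 2) ℚ) Kfield (MvPolynomial.X 0)

/-- The second indeterminate `x₂`. -/
def X2 : Kfield := algebraMap (MvPolynomial (Fin 2) ℚ) Kfield (MvPolynomial.X 1)

/-- `F(w₁,…,w_N) = ∑_D ∏_{k∈D} w_k`, the sum over subsets `D ⊆ {1,…,N}` containing no two
consecutive integers, evaluated at `w : ℕ → Kfield`. -/
def Fpoly (N : ℕ) (w : ℕ → Kfield) : Kfield :=
  ∑ D ∈ (Finset.Icc 1 N).powerset.filter (fun D => ∀ k ∈ D, k + 1 ∉ D),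
    ∏ k ∈ D, w k


abbrev Rpoly := MvPolynomial (Fin 2) ℚ

def wR (k : ℕ) : Rpoly := if k % 2 = 1 then MvPolynomial.X 0 ^ 2 else MvPolynomial.X 1 ^ 2

def q : ℕ → Rpoly
  | 0 => 1
  | 1 => 1 + MvPolynomial.X 0 ^ 2
  | (n+2) => q (n+1) + wR (n+2) * q n

def cR : ℕ → Rpoly
  | 0 => -(MvPolynomial.X 0 ^ 2 * MvPolynomial.X 1 ^ 2)
  | (n+1) => -(wR (n+2)) * cR n

lemma wper (n : ℕ) : wR (n+2) = wR n := by simp [wR, Nat.add_mod_right]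

lemma qrec (n : ℕ) : q (n+2) = q (n+1) + wR (n+2) * q n := by simp [q]

lemma crec (n : ℕ) : cR (n+1) = -(wR (n+2)) * cR n := by simp [cR]

lemma cassA : ∀ n, q (n+3) * q n = q (n+2) * q (n+1) + cR n := by
  intro n
  induction n with
  | zero => simp only [q, cR, wR]; norm_num; ring
  | succ m ih =>
    have eq2 := qrec m
    have eq3 := qrec (m+1)
    have eq4 := qrec (m+2)
    have ec := crec m
    have e4 : wR (m+4) = wR (m+2) := wper _
    linear_combination q (m+1) * eq4 + q (m+2) * q (m+1) * e4 - q (m+3) * eq2 -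
      wR (m+2) * ih - ec

lemma cassB (n : ℕ) : q (n+4) * q n = q (n+2)^2 + cR n := by
  have h := cassA n
  have eq2 := qrec n
  have eq4 := qrec (n+2)
  have e4 : wR (n+4) = wR (n+2) := wper _
  linear_combination h + q n * eq4 + q (n+2) * q n * e4 - q (n+2) * eq2

lemma codd : ∀ k, cR (2*k+1) = (MvPolynomial.X 0 ^ 2 : Rpoly)^(k+1) * (MvPolynomial.X 1 ^ 2 : Rpoly)^(k+2) := by
  intro k
  induction k with
  | zero =>
    simp only [cR, wR]
    norm_num
    ring
  | succ m ih =>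
    have e1 : cR (2*(m+1)+1) = -(wR (2*m+4)) * cR (2*m+2) := by
      have : 2*(m+1)+1 = (2*m+2)+1 := by ring
      rw [this, crec]
    have e2 : cR (2*m+2) = -(wR (2*m+3)) * cR (2*m+1) := crec _
    have w1 : wR (2*m+4) = MvPolynomial.X 1 ^ 2 := by
      simp [wR, Nat.add_mul_mod_self_left, show (2*m+4) % 2 = 0 by omega]
    have w2 : wR (2*m+3) = MvPolynomial.X 0 ^ 2 := by
      simp [wR, show (2*m+3) % 2 = 1 by omega]
    rw [e1, e2, w1, w2, ih]
    ring

lemma ccw (k : ℕ) : MvPolynomial.constantCoeff (wR k) = 0 := by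
  unfold wR; split <;> simp

lemma ccq : ∀ n, MvPolynomial.constantCoeff (q n) = 1 ∧ MvPolynomial.constantCoeff (q (n+1)) = 1 := by
  intro n
  induction n with
  | zero => constructor <;> simp [q]
  | succ m ih =>
    refine ⟨ih.2, ?_⟩
    rw [qrec, map_add, map_mul, ccw, ih.2, ih.1]
    ring

lemma qne (n : ℕ) : q n ≠ 0 := by
  intro h
  have := (ccq n).1
  rw [h] at this
  simp at this

lemma Frec (N : ℕ) (w : ℕ → Kfield) :
    Fpoly (N+2) w = Fpoly (N+1) w + w (N+2) * Fpoly N w := by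
  classical
  set P : Finset ℕ → Prop := fun D => ∀ k ∈ D, k + 1 ∉ D with hP
  have hsplit := Finset.sum_filter_add_sum_filter_not
    (((Finset.Icc 1 (N+2)).powerset.filter fun D => ∀ k ∈ D, k + 1 ∉ D))
    (fun D => (N+2) ∈ D) (fun D => ∏ k ∈ D, w k)
  unfold Fpoly
  rw [← hsplit]
  have h1 : (((Finset.Icc 1 (N+2)).powerset.filter fun D => ∀ k ∈ D, k + 1 ∉ D)).filter
      (fun D => ¬ (N+2) ∈ D) = (Finset.Icc 1 (N+1)).powerset.filter fun D => ∀ k ∈ D, k + 1 ∉ D := by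
    ext D
    simp only [Finset.mem_filter, Finset.mem_powerset, Finset.subset_iff, Finset.mem_Icc]
    constructor
    · rintro ⟨⟨hsub, hnc⟩, hmem⟩
      refine ⟨fun x hx => ?_, hnc⟩
      have := hsub hx
      have : x ≠ N + 2 := fun h => hmem (h ▸ hx)
      omega
    · rintro ⟨hsub, hnc⟩
      refine ⟨⟨fun x hx => by have := hsub hx; omega, hnc⟩, fun h => by have := hsub h; omega⟩
  have h2 : (((Finset.Icc 1 (N+2)).powerset.filter fun D => ∀ k ∈ D, k + 1 ∉ D)).filter
      (fun D => (N+2) ∈ D) =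
      ((Finset.Icc 1 N).powerset.filter fun D => ∀ k ∈ D, k + 1 ∉ D).image
        (insert (N+2)) := by
    ext D
    simp only [Finset.mem_filter, Finset.mem_powerset, Finset.subset_iff, Finset.mem_Icc,
      Finset.mem_image]
    constructor
    · rintro ⟨⟨hsub, hnc⟩, hmem⟩
      refine ⟨D.erase (N+2), ⟨fun x hx => ?_, fun k hk => ?_⟩, ?_⟩
      · have hx' : x ∈ D := Finset.mem_of_mem_erase hx
        have hxne : x ≠ N + 2 := Finset.ne_of_mem_erase hx
        have hle := hsub hx'
        have : x ≠ N + 1 := by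
          intro h; subst h; exact hnc _ hx' hmem
        omega
      · intro hk1
        exact hnc k (Finset.mem_of_mem_erase hk) (Finset.mem_of_mem_erase hk1)
      · exact Finset.insert_erase hmem
    · rintro ⟨D', ⟨hsub, hnc⟩, rfl⟩
      have hN2 : N + 2 ∉ D' := fun h => by have := hsub h; omega
      refine ⟨⟨fun x hx => ?_, fun k hk hk1 => ?_⟩, Finset.mem_insert_self _ _⟩
      · rcases Finset.mem_insert.mp hx with h | h
        · omega
        · have := hsub h; omega
      · rcases Finset.mem_insert.mp hk with h | h
        · rcases Finset.mem_insert.mp hk1 with h' | h'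
          · omega
          · have := hsub h'; omega
        · rcases Finset.mem_insert.mp hk1 with h' | h'
          · have := hsub h; omega
          · exact hnc k h h'
  rw [h1, h2, Finset.sum_image (fun a ha b hb hab => ?_)]
  · rw [add_comm]
    congr 1
    rw [Finset.mul_sum]
    apply Finset.sum_congr rfl
    intro D hD
    have hD2 : N + 2 ∉ D := by
      simp only [Finset.mem_filter, Finset.mem_powerset] at hD
      intro h
      have := hD.1 h
      simp only [Finset.mem_Icc] at this
      omega
    rw [Finset.prod_insert hD2]
  · have ha2 : N + 2 ∉ a := by
      simp only [Finset.mem_coe, Finset.mem_filter, Finset.mem_powerset] at ha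
      intro h; have := ha.1 h; simp only [Finset.mem_Icc] at this; omega
    have hb2 : N + 2 ∉ b := by
      simp only [Finset.mem_coe, Finset.mem_filter, Finset.mem_powerset] at hb
      intro h; have := hb.1 h; simp only [Finset.mem_Icc] at this; omega
    have := congrArg (Finset.erase · (N+2)) hab
    simpa [Finset.erase_insert ha2, Finset.erase_insert hb2] using this

lemma F0 (w : ℕ → Kfield) : Fpoly 0 w = 1 := by
  rw [Fpoly]
  rw [show ((Finset.Icc 1 0 : Finset ℕ).powerset.filter fun D => ∀ k ∈ D, k + 1 ∉ D) = {∅}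
    from by decide]
  simp

lemma F1 (w : ℕ → Kfield) : Fpoly 1 w = 1 + w 1 := by
  rw [Fpoly]
  rw [show ((Finset.Icc 1 1 : Finset ℕ).powerset.filter fun D => ∀ k ∈ D, k + 1 ∉ D) = {∅, {1}}
    from by decide]
  rw [Finset.sum_insert (by decide), Finset.sum_singleton, Finset.prod_empty,
    Finset.prod_singleton]

abbrev phi : Rpoly →+* Kfield := (algebraMap Rpoly Kfield : Rpoly →+* Kfield)

lemma phiinj : Function.Injective phi := IsFractionRing.injective Rpoly Kfield

lemma hX1 : X1 ≠ 0 := by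
  rw [X1]
  intro h
  exact MvPolynomial.X_ne_zero 0 (phiinj (by simpa using h))

lemma hX2 : X2 ≠ 0 := by
  rw [X2]
  intro h
  exact MvPolynomial.X_ne_zero 1 (phiinj (by simpa using h))

lemma hqne (n : ℕ) : phi (q n) ≠ 0 := by
  intro h
  exact qne n (phiinj (by simpa using h))

lemma FeqQ : ∀ N, Fpoly N (fun k => if k % 2 = 1 then X1 ^ 2 else X2 ^ 2) = phi (q N) ∧
    Fpoly (N+1) (fun k => if k % 2 = 1 then X1 ^ 2 else X2 ^ 2) = phi (q (N+1)) := by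
  intro N
  induction N with
  | zero =>
    constructor
    · rw [F0]; simp [q]
    · rw [F1]; norm_num [q, X1]
  | succ m ih =>
    refine ⟨ih.2, ?_⟩
    have hw : (if (m+2) % 2 = 1 then X1 ^ 2 else X2 ^ 2 : Kfield) = phi (wR (m+2)) := by
      unfold wR
      split_ifs <;> simp [X1, X2]
    rw [Frec, ih.1, ih.2, qrec, map_add, map_mul, hw]


/-- For the sequence `x_{m-1} x_{m+1} = x_m^2 + 1`, for every `n ≥ 0`,
`x_{-n} = x₁^{-n} x₂^{-(n+1)} F(w₁,…,w_{2n+1})` with `w_k = x₁²` for odd `k` and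
`w_k = x₂²` for even `k`. -/
theorem stmt15 (x : ℤ → Kfield) (h1 : x 1 = X1) (h2 : x 2 = X2)
    (hrec : ∀ m : ℤ, x (m - 1) * x (m + 1) = x m ^ 2 + 1) :
    ∀ n : ℕ, x (-(n : ℤ)) =
      X1 ^ (-(n : ℤ)) * X2 ^ (-(n + 1 : ℤ)) *
        Fpoly (2 * n + 1) (fun k => if k % 2 = 1 then X1 ^ 2 else X2 ^ 2) := by
  set P : ℕ → Prop := fun n =>
    x (-(n : ℤ)) * (X1 ^ n * X2 ^ (n+1)) = phi (q (2*n+1)) with hPdef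
  have hq1 : phi (q 1) = 1 + X1 ^ 2 := by simp [q, X1]
  have hq3 : phi (q 3) = 1 + 2*X1^2 + X2^2 + X1^4 := by
    simp only [q, wR, show ¬ (2 % 2 = 1) by norm_num, show (3 % 2 = 1) by norm_num,
      if_true, if_false, map_add, map_mul, map_one, map_pow, X1, X2]
    norm_num
    ring
  have hx0 : x 0 * X2 = X1 ^ 2 + 1 := by
    have e := hrec 1
    norm_num at e
    rwa [h1, h2] at e
  have P0 : P 0 := by
    simp only [hPdef, Nat.cast_zero, neg_zero, pow_zero, pow_one, one_mul,
      Nat.mul_zero, Nat.zero_add, hq1]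
    linear_combination hx0
  have P1 : P 1 := by
    have e := hrec 0
    norm_num at e
    rw [h1] at e
    simp only [hPdef, Nat.cast_one, pow_one]
    rw [show (2*1+1 : ℕ) = 3 by norm_num, hq3]
    linear_combination X2^2 * e + (x 0 * X2 + X1^2 + 1) * hx0
  have step : ∀ n : ℕ, P n → P (n+1) → P (n+2) := by
    intro n Pn Pn1
    simp only [hPdef] at Pn Pn1 ⊢
    have e := hrec (-((n+1:ℕ) : ℤ))
    rw [show (-((n+1:ℕ):ℤ) - 1) = -((n+2:ℕ):ℤ) by push_cast; ring,
        show (-((n+1:ℕ):ℤ) + 1) = -((n:ℕ):ℤ) by push_cast; ring] at e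
    have hb := cassB (2*n+1)
    rw [codd n] at hb
    have hk : phi (q (2*n+1+4)) * phi (q (2*n+1)) =
        phi (q (2*n+1+2))^2 + (X1^2)^(n+1) * (X2^2)^(n+2) := by
      simpa [map_add, map_mul, map_pow, X1, X2] using congrArg phi hb
    rw [show 2*(n+2)+1 = 2*n+1+4 by ring]
    rw [show 2*(n+1)+1 = 2*n+1+2 by ring] at Pn1
    refine mul_right_cancel₀ (hqne (2*n+1)) ?_
    linear_combination (-(x (-((n+2:ℕ):ℤ)) * X1^(n+2) * X2^(n+3))) * Pn +
      (X1^(2*n+2) * X2^(2*n+4)) * e +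
      (x (-((n+1:ℕ):ℤ)) * X1^(n+1) * X2^(n+2) + phi (q (2*n+1+2))) * Pn1 - hk
  have key : ∀ n, P n ∧ P (n+1) := by
    intro n
    induction n with
    | zero => exact ⟨P0, P1⟩
    | succ m ih => exact ⟨ih.2, step m ih.1 ih.2⟩
  intro n
  have ha : (X1 ^ n : Kfield) ≠ 0 := pow_ne_zero _ hX1
  have hb : (X2 ^ (n+1) : Kfield) ≠ 0 := pow_ne_zero _ hX2
  rw [(FeqQ (2*n+1)).1,
    show X1 ^ (-(n:ℤ)) = (X1 ^ n)⁻¹ by rw [zpow_neg, zpow_natCast],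
    show X2 ^ (-(n+1:ℤ)) = (X2 ^ (n+1))⁻¹ by
      rw [show (-(n+1:ℤ)) = -((n+1:ℕ):ℤ) by push_cast; ring, zpow_neg, zpow_natCast]]
  refine mul_right_cancel₀ (mul_ne_zero ha hb) ?_
  have hkey := (key n).1
  simp only [hPdef] at hkey
  rw [hkey, show ((X1^n)⁻¹ * (X2^(n+1))⁻¹ * phi (q (2*n+1))) * (X1^n * X2^(n+1)) =
      phi (q (2*n+1)) * ((X1^n)⁻¹ * X1^n) * ((X2^(n+1))⁻¹ * X2^(n+1)) from by ring,
    inv_mul_cancel₀ ha, inv_mul_cancel₀ hb, mul_one, mul_one]
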